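/- arXiv:2412.03828 — 2 statements merged into one kernel-verified Lean document; each statement's English description precedes it below -/
import Mathlib

section
/- Let d ≥ 1 and λ ∈ ℂ with Im λ ≠ 0. Then the map sending h ∈ 𝓢(ℝ^{1+d}, ℂ) to the function (τ, ξ) ↦ h(τ, ξ)/(τ² − ‖ξ‖² + λ) is a well-defined continuous linear map from 𝓢(ℝ^{1+d}, ℂ) to itself. -/
/-!
Since `Im λ ≠ 0`, the symbol `q(τ, ξ) = τ² − ‖ξ‖² + λ` satisfies `|q| ≥ |Im λ| > 0`. A polynomial
has temperate growth, and so does `1 / q`: it is `z ↦ z⁻¹` composed with `q`, and the `n`-th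
derivative `(-1)ⁿ n! z⁻ⁿ⁻¹` of the inverse is bounded on `{‖z‖ ≥ ε}` for every `ε > 0`.
Multiplication by a function of temperate growth is a continuous linear map on Schwartz space.
-/

open SchwartzMap
open scoped Nat

section Inverse

variable {𝕜 : Type*} [RCLike 𝕜]

theorem norm_iteratedFDeriv_inv (n : ℕ) {z : 𝕜} (hz : z ≠ 0) :
    ‖iteratedFDeriv ℝ n Inv.inv z‖ = n ! * ‖z‖⁻¹ ^ (n + 1) := by
  rw [← (contDiffAt_inv 𝕜 hz).restrictScalars_iteratedFDeriv (𝕜 := ℝ) (n := n),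
    Function.comp_apply, ContinuousMultilinearMap.norm_restrictScalars,
    norm_iteratedFDeriv_eq_norm_iteratedDeriv, iteratedDeriv_eq_iterate, iter_deriv_inv,
    show (-1 - n : ℤ) = -↑(n + 1) by push_cast; ring, zpow_neg, zpow_natCast]
  simp

variable {E : Type*} [NormedAddCommGroup E] [NormedSpace ℝ E]

theorem Function.HasTemperateGrowth.inv {f : E → 𝕜} (hf : f.HasTemperateGrowth) {ε : ℝ}
    (hε : 0 < ε) (hfε : ∀ x, ε ≤ ‖f x‖) : (fun x ↦ (f x)⁻¹).HasTemperateGrowth := by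
  -- an open neighbourhood of the range of `f` on which all derivatives of `z ↦ z⁻¹` are bounded
  set t := {z : 𝕜 | ε / 2 < ‖z‖}
  have ht : IsOpen t := isOpen_lt continuous_const continuous_norm
  have ht_ne : ∀ z ∈ t, z ≠ 0 := fun z hz ↦ norm_pos_iff.mp ((half_pos hε).trans hz)
  refine hf.comp' (g := Inv.inv) (t := t) ?_ ht.uniqueDiffOn ?_ fun N ↦ ⟨0,
    ∑ n ∈ Finset.range (N + 1), n ! * (ε / 2)⁻¹ ^ (n + 1), by positivity, fun n hn z hz ↦ ?_⟩
  · rintro _ ⟨x, rfl⟩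
    exact (half_lt_self hε).trans_le (hfε x)
  · exact ((contDiffOn_inv 𝕜).restrict_scalars ℝ).mono ht_ne
  · rw [iteratedFDerivWithin_of_isOpen n ht hz, norm_iteratedFDeriv_inv n (ht_ne z hz),
      pow_zero, mul_one]
    calc (n ! : ℝ) * ‖z‖⁻¹ ^ (n + 1) ≤ n ! * (ε / 2)⁻¹ ^ (n + 1) := by
          gcongr
          exact hz.le
      _ ≤ _ := Finset.single_le_sum (f := fun n ↦ (n ! : ℝ) * (ε / 2)⁻¹ ^ (n + 1))
          (fun _ _ ↦ by positivity) (Finset.mem_range_succ_iff.mpr hn)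

end Inverse

theorem hasTemperateGrowth_sub_norm_sq_add_const (H : Type*) [NormedAddCommGroup H]
    [InnerProductSpace ℝ H] (c : ℂ) :
    (fun p : ℝ × H ↦ ((p.1 ^ 2 - ‖p.2‖ ^ 2 : ℝ) : ℂ) + c).HasTemperateGrowth :=
  (Complex.ofRealCLM.hasTemperateGrowth.comp
    (((ContinuousLinearMap.fst ℝ ℝ H).hasTemperateGrowth.pow 2).sub
      ((Function.hasTemperateGrowth_norm_sq H).comp
        (ContinuousLinearMap.snd ℝ ℝ H).hasTemperateGrowth))).add (.const c)

theorem abs_im_le_norm_ofReal_add (r : ℝ) (c : ℂ) : |c.im| ≤ ‖(r : ℂ) + c‖ := by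
  simpa using Complex.abs_im_le_norm ((r : ℂ) + c)

theorem division_by_symbol_CLM_general (d : ℕ)
    (lam : ℂ) (hlam : lam.im ≠ 0) :
    ∃ T : 𝓢(ℝ × EuclideanSpace ℝ (Fin d), ℂ) →L[ℂ] 𝓢(ℝ × EuclideanSpace ℝ (Fin d), ℂ),
      ∀ (h : 𝓢(ℝ × EuclideanSpace ℝ (Fin d), ℂ)) (p : ℝ × EuclideanSpace ℝ (Fin d)),
        T h p = h p / (((p.1 ^ 2 - ‖p.2‖ ^ 2 : ℝ) : ℂ) + lam) := by
  have hinv := (hasTemperateGrowth_sub_norm_sq_add_const (EuclideanSpace ℝ (Fin d)) lam).inv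
    (abs_pos.mpr hlam) fun p ↦ abs_im_le_norm_ofReal_add _ lam
  refine ⟨smulLeftCLM ℂ fun p ↦ ((p.1 ^ 2 - ‖p.2‖ ^ 2 : ℝ) + lam)⁻¹, fun h p ↦ ?_⟩
  rw [smulLeftCLM_apply_apply hinv, smul_eq_mul, div_eq_inv_mul]

/-- For `Im λ ≠ 0`, division by `τ² − ‖ξ‖² + λ` is a well-defined continuous linear map
of the Schwartz space `𝓢(ℝ × ℝ^d, ℂ)` to itself. -/
theorem division_by_symbol_CLM (d : ℕ) (hd : 1 ≤ d)
    (lam : ℂ) (hlam : lam.im ≠ 0) :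
    ∃ T : 𝓢(ℝ × EuclideanSpace ℝ (Fin d), ℂ) →L[ℂ] 𝓢(ℝ × EuclideanSpace ℝ (Fin d), ℂ),
      ∀ (h : 𝓢(ℝ × EuclideanSpace ℝ (Fin d), ℂ)) (p : ℝ × EuclideanSpace ℝ (Fin d)),
        T h p = h p / (((p.1 ^ 2 - ‖p.2‖ ^ 2 : ℝ) : ℂ) + lam) :=
  division_by_symbol_CLM_general d lam hlam
end

section
/- Let d ≥ 1 and λ ∈ ℂ with Im λ ≠ 0. Then the map u ↦ □u − λu is a continuous linear bijection of 𝓢(ℝ^{1+d}, ℂ) onto itself with continuous inverse (a continuous linear equivalence of the Schwartz space). -/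
open MeasureTheory SchwartzMap Complex
open scoped SchwartzMap

abbrev Spacetime (d : ℕ) := EuclideanSpace ℝ (Fin (d + 1))

/-- The d'Alembertian `□f = ∂_t² f − Σ_{j=1}^d ∂_{x_j}² f` as a continuous linear operator
on the Schwartz space `𝓢(ℝ^{1+d}, ℂ)`. -/
noncomputable def dAlembertian (d : ℕ) :
    𝓢(Spacetime d, ℂ) →L[ℂ] 𝓢(Spacetime d, ℂ) :=
  (LineDeriv.lineDerivOpCLM ℂ 𝓢(Spacetime d, ℂ) (EuclideanSpace.single 0 1 : Spacetime d)).comp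
      (LineDeriv.lineDerivOpCLM ℂ 𝓢(Spacetime d, ℂ) (EuclideanSpace.single 0 1 : Spacetime d))
    - ∑ j : Fin d,
      (LineDeriv.lineDerivOpCLM ℂ 𝓢(Spacetime d, ℂ) (EuclideanSpace.single j.succ 1 : Spacetime d)).comp
        (LineDeriv.lineDerivOpCLM ℂ 𝓢(Spacetime d, ℂ) (EuclideanSpace.single j.succ 1 : Spacetime d))

/-!
Under the Fourier transform, `∂_v` becomes multiplication by `2πi⟪ξ, v⟫`, so `□` becomes
multiplication by the real symbol `p(ξ) = 4π² (|ξ'|² - ξ₀²)` and `□ - λ` is the Fourier multiplier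
with symbol `p - λ`. Since `|p(ξ) - λ| ≥ |Im λ| > 0`, and the `n`-th derivative of
`t ↦ (t - λ)⁻¹` on `ℝ` is `(-1)ⁿ n! (t - λ)⁻ⁿ⁻¹`, bounded by `n! |Im λ|⁻ⁿ⁻¹`, the function
`(p - λ)⁻¹` has temperate growth as well; the Fourier multiplier with that symbol is then a
continuous inverse.
-/

namespace SchwartzMap

open FourierTransform LineDeriv Real

variable {𝕜 E F : Type*} [RCLike 𝕜]
  [NormedAddCommGroup E] [InnerProductSpace ℝ E] [FiniteDimensional ℝ E]
  [MeasurableSpace E] [BorelSpace E]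
  [NormedAddCommGroup F] [NormedSpace ℂ F] [NormedSpace 𝕜 F] [SMulCommClass ℂ 𝕜 F]

theorem fourierMultiplierCLM_sub {g₁ g₂ : E → 𝕜} (hg₁ : g₁.HasTemperateGrowth)
    (hg₂ : g₂.HasTemperateGrowth) :
    fourierMultiplierCLM F (g₁ - g₂) = fourierMultiplierCLM F g₁ - fourierMultiplierCLM F g₂ := by
  rw [fourierMultiplierCLM, fourierMultiplierCLM, fourierMultiplierCLM, smulLeftCLM_sub hg₁ hg₂,
    ContinuousLinearMap.sub_comp, ContinuousLinearMap.comp_sub]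

variable [CompleteSpace F]

noncomputable def fourierMultiplierCLE (g : E → 𝕜) (hg : g.HasTemperateGrowth)
    (hg_inv : g⁻¹.HasTemperateGrowth) (hg_ne : ∀ x, g x ≠ 0) : 𝓢(E, F) ≃L[𝕜] 𝓢(E, F) :=
  .equivOfInverse (fourierMultiplierCLM F g) (fourierMultiplierCLM F g⁻¹)
    (fun f ↦ by
      rw [fourierMultiplierCLM_fourierMultiplierCLM_apply hg_inv hg,
        show g⁻¹ * g = fun _ ↦ 1 from funext fun x ↦ inv_mul_cancel₀ (hg_ne x)]
      simp)
    (fun f ↦ by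
      rw [fourierMultiplierCLM_fourierMultiplierCLM_apply hg hg_inv,
        show g * g⁻¹ = fun _ ↦ 1 from funext fun x ↦ mul_inv_cancel₀ (hg_ne x)]
      simp)

theorem fourierMultiplierCLE_apply {g : E → 𝕜} (hg : g.HasTemperateGrowth)
    (hg_inv : g⁻¹.HasTemperateGrowth) (hg_ne : ∀ x, g x ≠ 0) (f : 𝓢(E, F)) :
    fourierMultiplierCLE g hg hg_inv hg_ne f = fourierMultiplierCLM F g f :=
  rfl

theorem lineDerivOp_lineDerivOp_eq_fourierMultiplierCLM (m : E) (f : 𝓢(E, F)) :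
    ∂_{m} (∂_{m} f) =
      fourierMultiplierCLM F (fun ξ ↦ ((-(2 * π) ^ 2 * inner ℝ ξ m ^ 2 : ℝ) : ℂ)) f := by
  have hm : (fun ξ ↦ ((inner ℝ ξ m : ℝ) : ℂ)).HasTemperateGrowth := by fun_prop
  have h_deriv (f : 𝓢(E, F)) :
      ∂_{m} f = (2 * π * I) • fourierMultiplierCLM F (fun ξ ↦ ((inner ℝ ξ m : ℝ) : ℂ)) f := by
    rw [lineDeriv_eq_fourierMultiplierCLM, ← fourierMultiplierCLM_ofReal ℂ (by fun_prop)]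
    rfl
  rw [h_deriv, h_deriv, map_smul, smul_smul, fourierMultiplierCLM_fourierMultiplierCLM_apply hm hm,
    ← _root_.smul_apply, ← fourierMultiplierCLM_smul (hm.mul hm)]
  congr 2
  ext ξ
  simp only [Pi.smul_apply, Pi.mul_apply, smul_eq_mul]
  push_cast
  linear_combination (2 * π * inner ℝ ξ m : ℂ) ^ 2 * I_sq

end SchwartzMap

open scoped Nat

namespace Complex

variable {lam : ℂ}

theorem ofReal_sub_ne_zero_of_im_ne_zero (hlam : lam.im ≠ 0) (t : ℝ) : (t : ℂ) - lam ≠ 0 :=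
  fun h ↦ hlam (by simpa using congrArg Complex.im h)

theorem norm_ofReal_sub_inv_le (hlam : lam.im ≠ 0) (t : ℝ) : ‖((t : ℂ) - lam)⁻¹‖ ≤ |lam.im|⁻¹ := by
  rw [norm_inv]
  apply inv_anti₀ (abs_pos.mpr hlam)
  simpa using abs_im_le_norm ((t : ℂ) - lam)

theorem iteratedDeriv_ofReal_sub_inv (hlam : lam.im ≠ 0) (n : ℕ) :
    iteratedDeriv n (fun t : ℝ ↦ ((t : ℂ) - lam)⁻¹) =
      fun t : ℝ ↦ (-1) ^ n * n ! * ((t : ℂ) - lam)⁻¹ ^ (n + 1) := by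
  induction n with
  | zero => simp
  | succ n ih =>
    rw [iteratedDeriv_succ, ih]
    ext t
    have h := ((((hasDerivAt_id' (t : ℂ)).sub_const lam).fun_inv
      (ofReal_sub_ne_zero_of_im_ne_zero hlam t)).fun_pow (n + 1)).const_mul ((-1) ^ n * n ! : ℂ)
    rw [h.comp_ofReal.deriv, Nat.factorial_succ, Nat.add_sub_cancel, div_eq_mul_inv, ← inv_pow]
    push_cast
    ring

theorem hasTemperateGrowth_ofReal_sub_inv (hlam : lam.im ≠ 0) :
    (fun t : ℝ ↦ ((t : ℂ) - lam)⁻¹).HasTemperateGrowth := by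
  refine ⟨(ofRealCLM.contDiff.sub contDiff_const).inv
    (ofReal_sub_ne_zero_of_im_ne_zero hlam), fun n ↦ ⟨0, n ! * |lam.im|⁻¹ ^ (n + 1), fun t ↦ ?_⟩⟩
  rw [norm_iteratedFDeriv_eq_norm_iteratedDeriv, iteratedDeriv_ofReal_sub_inv hlam]
  simp only [norm_mul, norm_pow, norm_neg, norm_one, one_pow, one_mul, norm_natCast,
    pow_zero, mul_one]
  gcongr
  exact norm_ofReal_sub_inv_le hlam t

end Complex

@[fun_prop]
theorem EuclideanSpace.hasTemperateGrowth_apply {ι : Type*} [Fintype ι] (i : ι) :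
    (fun x : EuclideanSpace ℝ ι ↦ x i).HasTemperateGrowth :=
  (EuclideanSpace.proj i).hasTemperateGrowth

section WaveOperator

open Real

variable {d : ℕ}

noncomputable def waveSymbol (d : ℕ) (ξ : Spacetime d) : ℝ :=
  (2 * π) ^ 2 * (∑ j : Fin d, ξ j.succ ^ 2 - ξ 0 ^ 2)

@[fun_prop]
theorem hasTemperateGrowth_waveSymbol : (waveSymbol d).HasTemperateGrowth := by
  unfold waveSymbol
  fun_prop

theorem dAlembertian_eq_fourierMultiplierCLM :
    dAlembertian d = fourierMultiplierCLM ℂ (fun ξ ↦ (waveSymbol d ξ : ℂ)) := by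
  have h_symbol : (fun ξ ↦ (waveSymbol d ξ : ℂ)) =
      (fun ξ : Spacetime d ↦ ((-(2 * π) ^ 2 * inner ℝ ξ (EuclideanSpace.single 0 1) ^ 2 : ℝ) : ℂ)) -
      fun ξ ↦ ∑ j : Fin d,
        ((-(2 * π) ^ 2 * inner ℝ ξ (EuclideanSpace.single j.succ 1) ^ 2 : ℝ) : ℂ) := by
    ext ξ
    simp [waveSymbol, EuclideanSpace.inner_single_right]
    rw [← Finset.mul_sum]
    ring
  rw [h_symbol, fourierMultiplierCLM_sub (by fun_prop) (by fun_prop),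
    fourierMultiplierCLM_sum ℂ (by fun_prop)]
  ext1 f
  simp [dAlembertian, lineDerivOp_lineDerivOp_eq_fourierMultiplierCLM]

theorem dAlembertian_sub_smul_eq_fourierMultiplierCLM (lam : ℂ) (u : 𝓢(Spacetime d, ℂ)) :
    dAlembertian d u - lam • u = fourierMultiplierCLM ℂ (fun ξ ↦ (waveSymbol d ξ : ℂ) - lam) u := by
  rw [← Pi.sub_def, fourierMultiplierCLM_sub (by fun_prop) (by fun_prop),
    dAlembertian_eq_fourierMultiplierCLM]
  simp

end WaveOperator

theorem dAlembertian_sub_lambda_equiv_general (d : ℕ)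
    (lam : ℂ) (hlam : lam.im ≠ 0) :
    ∃ T : 𝓢(Spacetime d, ℂ) ≃L[ℂ] 𝓢(Spacetime d, ℂ),
      ∀ u : 𝓢(Spacetime d, ℂ), T u = dAlembertian d u - lam • u := by
  have h_inv : (fun ξ : Spacetime d ↦ (waveSymbol d ξ : ℂ) - lam)⁻¹.HasTemperateGrowth :=
    (hasTemperateGrowth_ofReal_sub_inv hlam).comp hasTemperateGrowth_waveSymbol
  refine ⟨fourierMultiplierCLE _ (by fun_prop) h_inv
    (fun ξ ↦ ofReal_sub_ne_zero_of_im_ne_zero hlam _), fun u ↦ ?_⟩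
  rw [fourierMultiplierCLE_apply, dAlembertian_sub_smul_eq_fourierMultiplierCLM]

/-- For `Im λ ≠ 0`, the map `u ↦ □u − λu` is a continuous linear equivalence of the
Schwartz space `𝓢(ℝ^{1+d}, ℂ)` onto itself (a continuous linear bijection with
continuous inverse). -/
theorem dAlembertian_sub_lambda_equiv (d : ℕ) (hd : 1 ≤ d)
    (lam : ℂ) (hlam : lam.im ≠ 0) :
    ∃ T : 𝓢(Spacetime d, ℂ) ≃L[ℂ] 𝓢(Spacetime d, ℂ),
      ∀ u : 𝓢(Spacetime d, ℂ), T u = dAlembertian d u - lam • u :=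
  dAlembertian_sub_lambda_equiv_general d lam hlam
end
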